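/- If NPr^ε(λ) holds, then NPr^(ε+1)(λ⁺) holds. -/

import Mathlib

open FirstOrder Cardinal

/-- The increasing enumeration of a finite set in a linear order. -/
noncomputable def enumFun {M : Type*} [LinearOrder M] (w : Finset M) : Fin w.card → M :=
  fun i => (w.orderIsoOfFin rfl i : M)

/-- `rk(w,𝕄) ≥ 0`. -/
def rkBase (L : Language) (M : Type*) [LinearOrder M] [L.Structure M] (w : Finset M) : Prop :=
  ∀ φ : L.Formula (Fin w.card), φ.IsQF → ∀ k : Fin w.card,
    φ.Realize (enumFun w) →
      ¬ ({α : M | φ.Realize (Function.update (enumFun w) k α)}).Countable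

/-- Successor step of the splitting rank. -/
def rkSucc (L : Language) (M : Type*) [LinearOrder M] [L.Structure M]
    (IH : Finset M → Prop) (w : Finset M) : Prop :=
  ∀ φ : L.Formula (Fin w.card), φ.IsQF → ∀ k : Fin w.card,
    φ.Realize (enumFun w) →
      ∃ α : M, α ∉ w ∧ IH (insert α w) ∧ φ.Realize (Function.update (enumFun w) k α)

/-- The splitting rank relation `rk(w,𝕄) ≥ δ`. -/
noncomputable def rkGe (L : Language) (M : Type*) [LinearOrder M] [L.Structure M]
    (δ : Ordinal) : Finset M → Prop :=
  Ordinal.limitRecOn δ (rkBase L M) (fun _ IH => rkSucc L M IH)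
    (fun _ _ IH w => ∀ γ (hγ : γ < _), IH γ hγ w)

/-- `NPr^ε(λ)`: there is a model with universe of cardinality `λ` in a countable vocabulary
all of whose nonempty finite subsets `w` satisfy `1 + rk(w) ≤ ε`. -/
def NPr (ε : Ordinal) (lam : Cardinal) : Prop :=
  ∃ (M : Type) (instO : LinearOrder M) (L : FirstOrder.Language.{0, 0}) (instS : L.Structure M),
    Cardinal.mk M = lam ∧ L.card ≤ Cardinal.aleph0 ∧
    ∀ w : Finset M, w.Nonempty → ∀ δ : Ordinal, @rkGe L M instO instS δ w → 1 + δ ≤ ε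

/-!
Let `𝕄` witness `NPr^ε(λ)`, view `λ⁺` as a well-order `N`, and for each `b ∈ N` fix an injection
`E b` of `{x < b}` into `𝕄`. On `N` put, for each `L`-formula `ψ(x₀, …, xₙ₋₁)`, a relation
`R_ψ(x₀, …, xₙ₋₁, y)` saying that all `xᵢ < y` and `𝕄 ⊨ ψ(E y x₀, …, E y xₙ₋₁)`.
If `b = max w`, every quantifier-free condition on the codes `E b [w \ {b}]` is an atomic
`R_ψ`-condition on `w` that forces the new point below `b`, so `E b` carries splitting witnesses
in `N` to splitting witnesses in `𝕄`. Hence a set with at least two points has rank at most that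
of a nonempty subset of `𝕄`, i.e. `1 + rk ≤ ε`, and a singleton of rank `≥ γ + 1` contains a pair
of rank `≥ γ`, which costs one more step.
-/

open Language

universe u

section Rank

variable {L : Language} {M : Type*} [LinearOrder M] [L.Structure M]

lemma rkGe_zero : rkGe L M 0 = rkBase L M := Ordinal.limitRecOn_zero ..

lemma rkGe_add_one (δ : Ordinal) : rkGe L M (δ + 1) = rkSucc L M (rkGe L M δ) :=
  Ordinal.limitRecOn_add_one ..

lemma rkGe_iff_of_isSuccLimit {δ : Ordinal} (hδ : Order.IsSuccLimit δ) (w : Finset M) :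
    rkGe L M δ w ↔ ∀ γ < δ, rkGe L M γ w := by
  rw [rkGe, Ordinal.limitRecOn_limit _ _ _ _ hδ]
  rfl

lemma exists_insert_rkGe_of_rkGe_add_one {w : Finset M} (hw : w.Nonempty) {γ : Ordinal}
    (h : rkGe L M (γ + 1) w) : ∃ α ∉ w, rkGe L M γ (insert α w) := by
  rw [rkGe_add_one] at h
  obtain ⟨α, hα, hγ, -⟩ := h ⊤ BoundedFormula.IsQF.top ⟨0, Finset.card_pos.2 hw⟩
    (Formula.realize_top.2 trivial)
  exact ⟨α, hα, hγ⟩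

lemma one_add_le_add_one_of_rkGe {ε : Ordinal}
    (hε : ∀ w : Finset M, 2 ≤ w.card → ∀ δ, rkGe L M δ w → 1 + δ ≤ ε)
    {w : Finset M} (hw : w.Nonempty) {δ : Ordinal} (h : rkGe L M δ w) : 1 + δ ≤ ε + 1 := by
  induction δ using Ordinal.limitRecOn with
  | zero => simp
  | add_one γ _ =>
    obtain ⟨α, hα, hγ⟩ := exists_insert_rkGe_of_rkGe_add_one hw h
    have h2 : 2 ≤ (insert α w).card := by
      rw [Finset.card_insert_of_notMem hα]
      have := hw.card_pos
      omega
    rw [← add_assoc]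
    gcongr
    exact hε _ h2 γ hγ
  | limit δ hδ ih =>
    rw [rkGe_iff_of_isSuccLimit hδ] at h
    exact (Ordinal.add_le_iff_of_isSuccLimit hδ).2 fun γ hγ => ih γ hγ (h γ hγ)

end Rank

section Enum

variable {M M' : Type*} [LinearOrder M] [LinearOrder M']

lemma enumFun_mem (w : Finset M) (i : Fin w.card) : enumFun w i ∈ w :=
  (w.orderIsoOfFin rfl i).2

lemma exists_enumFun_eq {w : Finset M} {a : M} (ha : a ∈ w) : ∃ i, enumFun w i = a :=
  ⟨(w.orderIsoOfFin rfl).symm ⟨a, ha⟩, by simp [enumFun]⟩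

lemma enumFun_injective (w : Finset M) : Function.Injective (enumFun w) := fun _ _ h =>
  (w.orderIsoOfFin rfl).injective (Subtype.ext h)

lemma exists_comp_enumFun_eq_enumFun_image {s w : Finset M} (hs : s ⊆ w) (f : M → M') :
    ∃ ρ : Fin (s.image f).card → Fin w.card,
      (∀ j, enumFun w (ρ j) ∈ s) ∧ f ∘ enumFun w ∘ ρ = enumFun (s.image f) := by
  have (j : Fin (s.image f).card) : ∃ i, enumFun w i ∈ s ∧ f (enumFun w i) = enumFun _ j := by
    obtain ⟨a, ha, hfa⟩ := Finset.mem_image.1 (enumFun_mem _ j)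
    obtain ⟨i, rfl⟩ := exists_enumFun_eq (hs ha)
    exact ⟨i, ha, hfa⟩
  choose ρ hρs hρf using this
  exact ⟨ρ, hρs, funext hρf⟩

end Enum

section Star

def starRel (L : FirstOrder.Language.{0, 0}) : ℕ → Type
  | 0 => PEmpty
  | n + 1 => L.Formula (Fin n)

def starLang (L : FirstOrder.Language.{0, 0}) : FirstOrder.Language.{0, 0} :=
  ⟨fun _ => Empty, starRel L⟩

variable {L : FirstOrder.Language.{0, 0}}

instance [Countable L.Symbols] (n : ℕ) : Countable (starRel L n) := by
  cases n <;> dsimp only [starRel] <;> infer_instance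

lemma starLang_card (hL : L.card ≤ ℵ₀) : (starLang L).card ≤ ℵ₀ := by
  have := Cardinal.mk_le_aleph0_iff.1 hL
  exact Cardinal.mk_le_aleph0_iff.2 (inferInstanceAs (Countable ((Σ _, Empty) ⊕ Σ n, starRel L n)))

variable {M : Type} [L.Structure M] {N : Type} [LinearOrder N]

def starRelMap (E : N → N → M) : ∀ n, starRel L n → (Fin n → N) → Prop
  | 0, R, _ => R.elim
  | n + 1, ψ, v => (∀ i : Fin n, v i.castSucc < v (Fin.last n)) ∧
      ψ.Realize fun i => E (v (Fin.last n)) (v i.castSucc)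

abbrev starStructure (E : N → N → M) : (starLang L).Structure N where
  funMap f := f.elim
  RelMap {n} := starRelMap E n

def starAtom {α : Type} {n : ℕ} (ψ : L.Formula (Fin n)) (ρ : Fin n → α) (t : α) :
    (starLang L).Formula α :=
  Relations.formula (L := starLang L) (n := n + 1) ψ fun i =>
    Term.var (Fin.snoc (α := fun _ => α) ρ t i)

lemma realize_starAtom (E : N → N → M) {α : Type} {n : ℕ} (ψ : L.Formula (Fin n))
    (ρ : Fin n → α) (t : α) (u : α → N) :
    @Formula.Realize _ _ (starStructure E) _ (starAtom ψ ρ t) u ↔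
      (∀ j, u (ρ j) < u t) ∧ ψ.Realize (E (u t) ∘ u ∘ ρ) := by
  change starRelMap E (n + 1) ψ (fun i => u (Fin.snoc (α := fun _ => α) ρ t i)) ↔ _
  simp [starRelMap, Function.comp_def]

end Star

section Transfer

variable {L : FirstOrder.Language.{0, 0}} {M : Type} [LinearOrder M] [L.Structure M]
  {N : Type} [LinearOrder N] (E : N → N → M)

lemma exists_starFormula_realize_update_iff {s : Finset N} {b : N} (hs : ∀ a ∈ s, a < b)
    (ψ : L.Formula (Fin (s.image (E b)).card)) (k : Fin (s.image (E b)).card)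
    (hψ : ψ.Realize (enumFun (s.image (E b)))) :
    ∃ (φ : (starLang L).Formula (Fin (insert b s).card)) (k' : Fin (insert b s).card), φ.IsQF ∧
      @Formula.Realize _ _ (starStructure E) _ φ (enumFun (insert b s)) ∧
      ∀ α, @Formula.Realize _ _ (starStructure E) _ φ
          (Function.update (enumFun (insert b s)) k' α) ↔
        α < b ∧ ψ.Realize (Function.update (enumFun (s.image (E b))) k (E b α)) := by
  obtain ⟨ρ, hρs, hρE⟩ := exists_comp_enumFun_eq_enumFun_image (Finset.subset_insert b s) (E b)
  obtain ⟨t, ht⟩ := exists_enumFun_eq (Finset.mem_insert_self b s)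
  have hρ : Function.Injective ρ := by
    have : Function.Injective (E b ∘ enumFun _ ∘ ρ) := hρE ▸ enumFun_injective _
    exact this.of_comp.of_comp
  have hlt (j) : enumFun (insert b s) (ρ j) < b := hs _ (hρs j)
  have hρt (j) : ρ j ≠ t := fun h => (hlt j).ne (h ▸ ht)
  refine ⟨starAtom ψ ρ t, ρ k, (BoundedFormula.IsAtomic.rel _ _).isQF, ?_, fun α => ?_⟩
  · rw [realize_starAtom, ht, hρE]
    exact ⟨hlt, hψ⟩
  · have hlt_update :
        (∀ j, Function.update (enumFun (insert b s)) (ρ k) α (ρ j) < b) ↔ α < b := by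
      refine ⟨fun h => by simpa using h k, fun hα j => ?_⟩
      rcases eq_or_ne j k with rfl | hj
      · simpa using hα
      · simpa [Function.update_of_ne (hρ.ne hj)] using hlt j
    rw [realize_starAtom, Function.update_of_ne (hρt k).symm, ht, hlt_update,
      Function.update_comp_eq_of_injective _ hρ, Function.comp_update, hρE]

lemma rkGe_image_of_rkGe_insert (hE : ∀ b, Set.InjOn (E b) (Set.Iio b)) (δ : Ordinal) :
    ∀ {s : Finset N} {b : N}, (∀ a ∈ s, a < b) →
      @rkGe (starLang L) N _ (starStructure E) δ (insert b s) → rkGe L M δ (s.image (E b)) := by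
  let _ := starStructure (L := L) E
  induction δ using Ordinal.limitRecOn with
  | zero =>
    intro s b hs h
    rw [rkGe_zero] at h ⊢
    intro ψ hψ k hψr hcount
    obtain ⟨φ, k', hφ, hφr, hiff⟩ := exists_starFormula_realize_update_iff E hs ψ k hψr
    refine h φ hφ k' hφr (Set.MapsTo.countable_of_injOn (f := E b) ?_ ?_ hcount)
    · exact fun α hα => ((hiff α).1 hα).2
    · exact (hE b).mono fun α hα => ((hiff α).1 hα).1
  | add_one γ ih =>
    intro s b hs h
    rw [rkGe_add_one] at h ⊢
    intro ψ hψ k hψr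
    obtain ⟨φ, k', hφ, hφr, hiff⟩ := exists_starFormula_realize_update_iff E hs ψ k hψr
    obtain ⟨α, hα, hγ, hφα⟩ := h φ hφ k' hφr
    obtain ⟨hαb, hψα⟩ := (hiff α).1 hφα
    have hαs : α ∉ s := fun h => hα (Finset.mem_insert_of_mem h)
    refine ⟨E b α, fun hmem => ?_, ?_, hψα⟩
    · obtain ⟨a, ha, hEa⟩ := Finset.mem_image.1 hmem
      exact hαs (hE b (hs a ha) hαb hEa ▸ ha)
    · rw [Finset.insert_comm] at hγ
      rw [← Finset.image_insert]
      exact ih ((Finset.forall_mem_insert ..).2 ⟨hαb, hs⟩) hγ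
  | limit δ hδ ih =>
    intro s b hs h
    rw [rkGe_iff_of_isSuccLimit hδ] at h ⊢
    exact fun γ hγ => ih γ hγ hs (h γ hγ)

end Transfer

lemma one_add_le_of_rkGe_starStructure {L : FirstOrder.Language.{0, 0}} {M : Type}
    [LinearOrder M] [L.Structure M] {N : Type} [LinearOrder N] {E : N → N → M} {ε : Ordinal}
    (hM : ∀ w : Finset M, w.Nonempty → ∀ δ, rkGe L M δ w → 1 + δ ≤ ε)
    (hE : ∀ b, Set.InjOn (E b) (Set.Iio b)) {w : Finset N} (hw : 2 ≤ w.card) {δ : Ordinal}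
    (h : @rkGe (starLang L) N _ (starStructure E) δ w) : 1 + δ ≤ ε := by
  have hne : w.Nonempty := Finset.card_pos.1 (by omega)
  have hb := w.max'_mem hne
  have hs_ne : (w.erase (w.max' hne)).Nonempty :=
    Finset.card_pos.1 (by rw [Finset.card_erase_of_mem hb]; omega)
  rw [← Finset.insert_erase hb] at h
  exact hM _ (hs_ne.image _) δ
    (rkGe_image_of_rkGe_insert E hE δ (fun a => w.lt_max'_of_mem_erase_max' hne) h)

lemma exists_injOn_Iio {M N : Type u} [Nonempty M] [LinearOrder N]
    (h : ∀ b : N, #(Set.Iio b) ≤ #M) : ∃ E : N → N → M, ∀ b, Set.InjOn (E b) (Set.Iio b) := by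
  have (b : N) : ∃ f : N → M, Set.InjOn f (Set.Iio b) :=
    Set.exists_injOn_iff_injective.2 ⟨_, (Cardinal.le_def _ _).1 (h b) |>.some.injective⟩
  choose E hE using this
  exact ⟨E, hE⟩

lemma nPr_add_one_one (ε : Ordinal) : NPr (ε + 1) 1 := by
  let _ : Language.empty.Structure PUnit := Language.emptyStructure
  refine ⟨PUnit, inferInstance, Language.empty, inferInstance, Cardinal.mk_punit,
    by simp, fun w hw δ => one_add_le_add_one_of_rkGe (fun w hw => ?_) hw⟩
  have := w.card_le_univ
  simp only [Fintype.card_punit] at this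
  omega

/-- If `NPr^ε(λ)` holds, then `NPr^(ε+1)(λ⁺)` holds. -/
theorem stmt_7 (ε : Ordinal) (lam : Cardinal) (h : NPr ε lam) :
    NPr (ε + 1) (Order.succ lam) := by
  obtain ⟨M, _, L, _, rfl, hL, hM⟩ := h
  rcases isEmpty_or_nonempty M with _ | _
  · rw [Cardinal.mk_eq_zero, Cardinal.succ_zero]
    exact nPr_add_one_one ε
  have hIio (b : (Order.succ #M).ord.ToType) : #(Set.Iio b) ≤ #M :=
    Order.lt_succ_iff.1 (by simpa using Cardinal.mk_Iio_lt b (by simp))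
  obtain ⟨E, hE⟩ := exists_injOn_Iio hIio
  let _ := starStructure (L := L) E
  exact ⟨_, inferInstance, starLang L, inferInstance, Cardinal.mk_ord_toType _,
    starLang_card hL, fun w hw δ => one_add_le_add_one_of_rkGe
      (fun _ hv _ => one_add_le_of_rkGe_starStructure hM hE hv) hw⟩
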